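/- arXiv:1801.01491 — 6 statements merged into one kernel-verified Lean document; each statement's English description precedes it below -/
import Mathlib

section
/- Let P_n denote the lattice of partitions of {1,...,n} ordered by refinement, let G ⊆ Σ_n be a subgroup, and let x be the partition of {1,...,n} into G-orbits. Then x has a complement in the lattice of G-invariant partitions (i.e., there exists a G-invariant partition y with x ∧ y = 0̂ and x ∨ y = 1̂) if and only if all G-orbits on {1,...,n} are isomorphic as G-sets. -/
open MulAction

namespace Stmt7Aux

variable {M α : Type*} [Group M] [MulAction M α]

/-- `a` and `b` have equivariantly isomorphic orbits. -/
def Isot (M : Type*) {α : Type*} [Group M] [MulAction M α] (a b : α) : Prop :=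
  ∃ e : orbit M a ≃ orbit M b,
    ∀ (g : M) (x : α) (hx : x ∈ orbit M a) (hgx : g • x ∈ orbit M a),
      (e ⟨g • x, hgx⟩ : α) = g • (e ⟨x, hx⟩ : α)

lemma smul_mem_orbit' {a x : α} (g : M) (hx : x ∈ orbit M a) : g • x ∈ orbit M a := by
  obtain ⟨h, rfl⟩ := mem_orbit_iff.1 hx
  exact mem_orbit_iff.2 ⟨g * h, mul_smul g h a⟩

lemma equivSymm {a b : α} (e : (orbit M a : Set α) ≃ (orbit M b : Set α))
    (he : ∀ (g : M) (x : α) (hx : x ∈ orbit M a) (hgx : g • x ∈ orbit M a),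
      (e ⟨g • x, hgx⟩ : α) = g • (e ⟨x, hx⟩ : α)) :
    ∀ (g : M) (x : α) (hx : x ∈ orbit M b) (hgx : g • x ∈ orbit M b),
      (e.symm ⟨g • x, hgx⟩ : α) = g • (e.symm ⟨x, hx⟩ : α) := by
  intro g x hx hgx
  set w := e.symm ⟨x, hx⟩ with hw
  have hwmem : (w : α) ∈ orbit M a := w.2
  have h1 : e ⟨g • (w : α), smul_mem_orbit' g hwmem⟩ = ⟨g • x, hgx⟩ := by
    apply Subtype.ext
    rw [he g w hwmem (smul_mem_orbit' g hwmem)]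
    have h2 : (⟨(w : α), hwmem⟩ : orbit M a) = w := rfl
    rw [h2, hw, Equiv.apply_symm_apply]
  rw [← h1, Equiv.symm_apply_apply]

lemma Isot.refl (a : α) : Isot M a a :=
  ⟨Equiv.refl _, fun _ _ _ _ => rfl⟩

lemma Isot.symm {a b : α} (h : Isot M a b) : Isot M b a := by
  obtain ⟨e, he⟩ := h
  exact ⟨e.symm, equivSymm e he⟩

lemma Isot.trans {a b c : α} (h1 : Isot M a b) (h2 : Isot M b c) : Isot M a c := by
  obtain ⟨e1, he1⟩ := h1
  obtain ⟨e2, he2⟩ := h2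
  refine ⟨e1.trans e2, ?_⟩
  intro g x hx hgx
  simp only [Equiv.trans_apply]
  have k1 : e1 ⟨g • x, hgx⟩
      = ⟨g • (e1 ⟨x, hx⟩ : α), smul_mem_orbit' g (e1 ⟨x, hx⟩).2⟩ :=
    Subtype.ext (he1 g x hx hgx)
  rw [k1, he2 g (e1 ⟨x, hx⟩ : α) (e1 ⟨x, hx⟩).2 (smul_mem_orbit' g (e1 ⟨x, hx⟩).2)]

lemma isot_of_orbitRel {a b : α} (h : orbitRel M α a b) : Isot M a b := by
  have horb : orbit M a = orbit M b := orbit_eq_iff.2 (orbitRel_apply.1 h)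
  refine ⟨⟨fun p => ⟨p.1, horb ▸ p.2⟩, fun p => ⟨p.1, horb.symm ▸ p.2⟩,
    fun p => rfl, fun p => rfl⟩, fun g x hx hgx => rfl⟩

lemma isot_of_y (y : Setoid α) (hy : ∀ (g : M) (a b : α), y a b → y (g • a) (g • b))
    (hinf : ∀ a b : α, orbitRel M α a b → y a b → a = b)
    {u v : α} (huv : y u v) : Isot M u v := by
  classical
  -- well-definedness
  have W : ∀ (p q : α), y p q → ∀ g h : M, g • p = h • p → g • q = h • q := by
    intro p q hpq g h hg
    have h0 : (h⁻¹ * g) • p = p := by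
      rw [mul_smul, hg, inv_smul_smul]
    have h2 : y p ((h⁻¹ * g) • q) := by
      have := hy (h⁻¹ * g) p q hpq
      rwa [h0] at this
    have h3 : y q ((h⁻¹ * g) • q) := y.trans (y.symm hpq) h2
    have h4 : orbitRel M α ((h⁻¹ * g) • q) q := orbitRel_apply.2 (mem_orbit q _)
    have h5 : (h⁻¹ * g) • q = q := hinf _ _ h4 (y.symm h3)
    have := congrArg (h • ·) h5
    simpa [smul_smul, mul_inv_cancel_left] using this
  have keyu : ∀ w : orbit M u, ∃ g : M, g • u = (w : α) := fun w => mem_orbit_iff.1 w.2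
  have keyv : ∀ w : orbit M v, ∃ g : M, g • v = (w : α) := fun w => mem_orbit_iff.1 w.2
  let ku : orbit M u → M := fun w => Classical.choose (keyu w)
  let kv : orbit M v → M := fun w => Classical.choose (keyv w)
  have hku : ∀ w : orbit M u, ku w • u = (w : α) := fun w => Classical.choose_spec (keyu w)
  have hkv : ∀ w : orbit M v, kv w • v = (w : α) := fun w => Classical.choose_spec (keyv w)
  let φ : orbit M u → orbit M v := fun w => ⟨ku w • v, mem_orbit v _⟩
  let ψ : orbit M v → orbit M u := fun w => ⟨kv w • u, mem_orbit u _⟩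
  have φspec : ∀ (w : orbit M u) (g : M), g • u = (w : α) → (φ w : α) = g • v := by
    intro w g hg
    exact W u v huv (ku w) g (by rw [hku w, hg])
  have ψspec : ∀ (w : orbit M v) (g : M), g • v = (w : α) → (ψ w : α) = g • u := by
    intro w g hg
    exact W v u (y.symm huv) (kv w) g (by rw [hkv w, hg])
  have left : ∀ w : orbit M u, ψ (φ w) = w := by
    intro w
    apply Subtype.ext
    rw [ψspec (φ w) (ku w) rfl, hku w]
  have right : ∀ w : orbit M v, φ (ψ w) = w := by
    intro w
    apply Subtype.ext
    rw [φspec (ψ w) (kv w) rfl, hkv w]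
  refine ⟨⟨φ, ψ, left, right⟩, ?_⟩
  intro g x hx hgx
  show (φ ⟨g • x, hgx⟩ : α) = g • (φ ⟨x, hx⟩ : α)
  have h1 : (g * ku ⟨x, hx⟩) • u = g • x := by
    rw [mul_smul, hku ⟨x, hx⟩]
  rw [φspec ⟨g • x, hgx⟩ (g * ku ⟨x, hx⟩) h1, φspec ⟨x, hx⟩ (ku ⟨x, hx⟩) (hku _),
    mul_smul]


variable (M) in
lemma mem_orbit_out (u : α) : u ∈ orbit M (Quotient.out (Quotient.mk (orbitRel M α) u)) :=
  orbitRel_apply.1 ((orbitRel M α).symm (Quotient.exact (Quotient.out_eq _)))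

/-- The "coordinate" map induced by a compatible family of orbit isomorphisms. -/
noncomputable def fmap (a0 : α) (E : ∀ b : α, (orbit M a0 : Set α) ≃ (orbit M b : Set α))
    (u : α) : α :=
  ((E (Quotient.out (Quotient.mk (orbitRel M α) u))).symm ⟨u, mem_orbit_out M u⟩ : α)

lemma fmap_mem (a0 : α) (E : ∀ b : α, (orbit M a0 : Set α) ≃ (orbit M b : Set α)) (u : α) :
    fmap a0 E u ∈ orbit M a0 := ((E _).symm _).2

lemma fmap_congr (a0 : α) (E : ∀ b : α, (orbit M a0 : Set α) ≃ (orbit M b : Set α)) (u : α)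
    (c : Quotient (orbitRel M α)) (hc : Quotient.mk (orbitRel M α) u = c)
    (hu : u ∈ orbit M (Quotient.out c)) :
    fmap a0 E u = ((E (Quotient.out c)).symm ⟨u, hu⟩ : α) := by
  subst hc; rfl

lemma fmap_smul (a0 : α) (E : ∀ b : α, (orbit M a0 : Set α) ≃ (orbit M b : Set α))
    (hE : ∀ b (g : M) (x : α) (hx : x ∈ orbit M a0) (hgx : g • x ∈ orbit M a0),
      (E b ⟨g • x, hgx⟩ : α) = g • (E b ⟨x, hx⟩ : α))
    (g : M) (u : α) : fmap a0 E (g • u) = g • fmap a0 E u := by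
  have hq : Quotient.mk (orbitRel M α) (g • u) = Quotient.mk (orbitRel M α) u :=
    Quotient.sound (orbitRel_apply.2 (mem_orbit u g))
  rw [fmap_congr a0 E (g • u) _ hq (hq ▸ mem_orbit_out M (g • u))]
  exact equivSymm (E _) (hE _) g u (mem_orbit_out M u) _

lemma fmap_inj (a0 : α) (E : ∀ b : α, (orbit M a0 : Set α) ≃ (orbit M b : Set α)) {p q : α}
    (h1 : orbitRel M α p q) (h2 : fmap a0 E p = fmap a0 E q) : p = q := by
  have hq : Quotient.mk (orbitRel M α) p = Quotient.mk (orbitRel M α) q := Quotient.sound h1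
  rw [fmap_congr a0 E p _ hq (hq ▸ mem_orbit_out M p), fmap_congr a0 E q _ rfl
    (mem_orbit_out M q)] at h2
  have h3 := (E (Quotient.out (Quotient.mk (orbitRel M α) q))).symm.injective
    (Subtype.coe_injective h2)
  exact congrArg Subtype.val h3

lemma fmap_companion (a0 : α) (E : ∀ b : α, (orbit M a0 : Set α) ≃ (orbit M b : Set α))
    (p : α) : ∃ s : α, fmap a0 E s = fmap a0 E p ∧ orbitRel M α s a0 := by
  have hb0a : orbitRel M α (Quotient.out (Quotient.mk (orbitRel M α) a0)) a0 :=
    Quotient.exact (Quotient.out_eq _)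
  set w : (orbit M (Quotient.out (Quotient.mk (orbitRel M α) a0)) : Set α) :=
    E (Quotient.out (Quotient.mk (orbitRel M α) a0)) ⟨fmap a0 E p, fmap_mem a0 E p⟩ with hw
  have hsb : orbitRel M α (w : α) a0 :=
    (orbitRel M α).trans' (orbitRel_apply.2 w.2) hb0a
  refine ⟨(w : α), ?_, hsb⟩
  have hq : Quotient.mk (orbitRel M α) (w : α) = Quotient.mk (orbitRel M α) a0 :=
    Quotient.sound hsb
  have hu : (w : α) ∈ orbit M (Quotient.out (Quotient.mk (orbitRel M α) a0)) := w.2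
  rw [fmap_congr a0 E (w : α) (Quotient.mk (orbitRel M α) a0) hq hu]
  have h4 : (⟨(w : α), hu⟩ : (orbit M (Quotient.out (Quotient.mk (orbitRel M α) a0)) : Set α))
      = w := rfl
  rw [h4, hw, Equiv.symm_apply_apply]

lemma exists_complement (a0 : α)
    (E : ∀ b : α, (orbit M a0 : Set α) ≃ (orbit M b : Set α))
    (hE : ∀ b (g : M) (x : α) (hx : x ∈ orbit M a0) (hgx : g • x ∈ orbit M a0),
      (E b ⟨g • x, hgx⟩ : α) = g • (E b ⟨x, hx⟩ : α)) :
    ∃ y : Setoid α,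
      (∀ (g : M) (a b : α), y a b → y (g • a) (g • b)) ∧
      orbitRel M α ⊓ y = ⊥ ∧ orbitRel M α ⊔ y = ⊤ := by
  refine ⟨Setoid.ker (fmap a0 E), ?_, ?_, ?_⟩
  · intro g a b hab
    have hab' : fmap a0 E a = fmap a0 E b := hab
    show fmap a0 E (g • a) = fmap a0 E (g • b)
    rw [fmap_smul a0 E hE, fmap_smul a0 E hE, hab']
  · apply Setoid.ext
    intro p q
    rw [Setoid.inf_iff_and]
    constructor
    · rintro ⟨h1, h2⟩
      show p = q
      exact fmap_inj a0 E h1 h2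
    · intro hb
      have hpq : p = q := hb
      subst hpq
      exact ⟨(orbitRel M α).refl' p, rfl⟩
  · apply le_antisymm le_top
    rw [Setoid.le_def]
    intro p q _
    obtain ⟨sp, hsp1, hsp2⟩ := fmap_companion a0 E p
    obtain ⟨sq, hsq1, hsq2⟩ := fmap_companion a0 E q
    have hle1 : orbitRel M α ≤ orbitRel M α ⊔ Setoid.ker (fmap a0 E) := le_sup_left
    have hle2 : Setoid.ker (fmap a0 E) ≤ orbitRel M α ⊔ Setoid.ker (fmap a0 E) := le_sup_right
    have t1 : (orbitRel M α ⊔ Setoid.ker (fmap a0 E)) p sp :=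
      Setoid.le_def.1 hle2 (show fmap a0 E p = fmap a0 E sp from hsp1.symm)
    have t2 : (orbitRel M α ⊔ Setoid.ker (fmap a0 E)) sp a0 := Setoid.le_def.1 hle1 hsp2
    have t3 : (orbitRel M α ⊔ Setoid.ker (fmap a0 E)) sq a0 := Setoid.le_def.1 hle1 hsq2
    have t4 : (orbitRel M α ⊔ Setoid.ker (fmap a0 E)) q sq :=
      Setoid.le_def.1 hle2 (show fmap a0 E q = fmap a0 E sq from hsq1.symm)
    exact (orbitRel M α ⊔ Setoid.ker (fmap a0 E)).trans' t1 ((orbitRel M α ⊔ Setoid.ker (fmap a0 E)).trans' t2 ((orbitRel M α ⊔ Setoid.ker (fmap a0 E)).trans' ((orbitRel M α ⊔ Setoid.ker (fmap a0 E)).symm' t3) ((orbitRel M α ⊔ Setoid.ker (fmap a0 E)).symm' t4)))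

end Stmt7Aux

/-- let `G ⊆ Σ_n` be a subgroup and let `x` be the partition of
`{1,…,n}` into `G`-orbits (encoded as the setoid `MulAction.orbitRel`).  Then `x`
admits a complement in the lattice of `G`-invariant partitions (i.e. there is a
`G`-invariant partition `y` with `x ⊓ y = ⊥` and `x ⊔ y = ⊤`) if and only if all
`G`-orbits are isomorphic as `G`-sets (i.e. `G` is isotypical). -/
theorem stmt7 (n : ℕ) (G : Subgroup (Equiv.Perm (Fin n))) :
    (∃ y : Setoid (Fin n),
        (∀ (g : G) (a b : Fin n), y.r a b → y.r (g • a) (g • b)) ∧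
        MulAction.orbitRel G (Fin n) ⊓ y = ⊥ ∧
        MulAction.orbitRel G (Fin n) ⊔ y = ⊤) ↔
      ∀ a b : Fin n,
        ∃ e : MulAction.orbit G a ≃ MulAction.orbit G b,
          ∀ (g : G) (x : Fin n) (hx : x ∈ MulAction.orbit G a)
            (hgx : g • x ∈ MulAction.orbit G a),
            (e ⟨g • x, hgx⟩ : Fin n) = g • (e ⟨x, hx⟩ : Fin n) := by
  constructor
  · rintro ⟨y, hy, hinf, hsup⟩ a b
    have hinf' : ∀ p q : Fin n, MulAction.orbitRel G (Fin n) p q → y p q → p = q := by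
      intro p q h1 h2
      have h3 : (MulAction.orbitRel G (Fin n) ⊓ y) p q := Setoid.inf_iff_and.2 ⟨h1, h2⟩
      rw [hinf] at h3
      exact h3
    have hsup' : (MulAction.orbitRel G (Fin n) ⊔ y) a b := by rw [hsup]; trivial
    rw [Setoid.sup_eq_eqvGen] at hsup'
    have h' : Relation.EqvGen (fun p q => MulAction.orbitRel G (Fin n) p q ∨ y p q) a b := hsup'
    clear hsup'
    have key : Stmt7Aux.Isot G a b := by
      induction h' with
      | rel p q hpq =>
        rcases hpq with hh | hh
        · exact Stmt7Aux.isot_of_orbitRel hh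
        · exact Stmt7Aux.isot_of_y y hy hinf' hh
      | refl p => exact Stmt7Aux.Isot.refl p
      | symm p q _ ih => exact ih.symm
      | trans p q r _ _ ih1 ih2 => exact ih1.trans ih2
    exact key
  · intro h
    rcases Nat.eq_zero_or_pos n with hn | hn
    · subst hn
      exact ⟨⊥, fun g a b hab => a.elim0, Setoid.ext fun a => a.elim0,
        Setoid.ext fun a => a.elim0⟩
    · choose E hE using h ⟨0, hn⟩
      exact Stmt7Aux.exists_complement ⟨0, hn⟩ E hE
end

section
/- Let G ⊆ Σ_n act isotypically and non-transitively on {1,...,n}, let x be the partition into G-orbits, and let x^⊥ be the set of G-invariant partitions y with x ∧ y = 0̂ and x ∨ y = 1̂. Then the normalizer N_{Σ_n}(G) acts transitively on x^⊥. -/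
/-!
A `G`-invariant partition `y` complementary to the orbit partition meets each orbit in exactly
one point per class. Fixing a point `t`, the map sending `a` to the point of the orbit of `t` in
the `y`-class of `a`, together with the orbit of `a`, is then a `G`-equivariant bijection
`α ≃ orbit G t × α ⧸ G` under which `y` becomes the kernel of the first projection. For two such
complements `y` and `z`, the composite `σ = Φ_z⁻¹ ∘ Φ_y` of these bijections commutes with `G`,
so it lies in the centralizer, hence in the normalizer, and it carries `y` to `z`.
-/

open MulAction

namespace MulAction

variable {G α : Type*} [Group G] [MulAction G α]

variable (G) in
structure IsOrbitComplement (y : Setoid α) : Prop where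
  smul_rel : ∀ (g : G) (a b : α), y a b → y (g • a) (g • b)
  inf_eq_bot : orbitRel G α ⊓ y = ⊥
  sup_eq_top : orbitRel G α ⊔ y = ⊤

theorem eq_of_mem_orbit_of_rel {y : Setoid α} (hbot : orbitRel G α ⊓ y = ⊥) {a b : α}
    (horb : a ∈ orbit G b) (hab : y a b) : a = b := by
  have : (orbitRel G α ⊓ y) a b := Setoid.inf_iff_and.2 ⟨orbitRel_apply.2 horb, hab⟩
  rwa [hbot, Setoid.bot_def] at this

theorem exists_mem_orbit_rel_of_sup_eq_top {y : Setoid α}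
    (hinv : ∀ (g : G) (a b : α), y a b → y (g • a) (g • b))
    (htop : orbitRel G α ⊔ y = ⊤) (a t : α) : ∃ b ∈ orbit G t, y a b := by
  -- "the `y`-class of `a` meets the orbit of `t`" is an equivalence relation above both relations
  let meets : Setoid α :=
    { r := fun a t => ∃ b ∈ orbit G t, y a b
      iseqv :=
        { refl := fun a => ⟨a, mem_orbit_self a, y.refl a⟩
          symm := by
            rintro a t ⟨_, ⟨g, rfl⟩, hab⟩
            refine ⟨g⁻¹ • a, mem_orbit a g⁻¹, y.symm ?_⟩
            simpa using hinv g⁻¹ _ _ hab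
          trans := by
            rintro a b c ⟨_, ⟨g, rfl⟩, hab⟩ ⟨_, ⟨h, rfl⟩, hbc⟩
            refine ⟨(g * h) • c, mem_orbit c (g * h), y.trans hab ?_⟩
            simpa [mul_smul] using hinv g _ _ hbc } }
  have hle : orbitRel G α ⊔ y ≤ meets :=
    sup_le (fun u v huv => ⟨u, orbitRel_apply.1 huv, y.refl u⟩)
      (fun u v huv => ⟨v, mem_orbit_self v, huv⟩)
  rw [htop] at hle
  exact hle trivial

namespace IsOrbitComplement

variable {y : Setoid α} (hy : IsOrbitComplement G y)

noncomputable def proj (t a : α) : α :=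
  (exists_mem_orbit_rel_of_sup_eq_top hy.smul_rel hy.sup_eq_top a t).choose

theorem proj_mem_orbit (t a : α) : hy.proj t a ∈ orbit G t :=
  (exists_mem_orbit_rel_of_sup_eq_top hy.smul_rel hy.sup_eq_top a t).choose_spec.1

theorem rel_proj (t a : α) : y a (hy.proj t a) :=
  (exists_mem_orbit_rel_of_sup_eq_top hy.smul_rel hy.sup_eq_top a t).choose_spec.2

theorem eq_proj {t a b : α} (hb : b ∈ orbit G t) (hab : y a b) : b = hy.proj t a := by
  refine eq_of_mem_orbit_of_rel hy.inf_eq_bot ?_ (y.trans (y.symm hab) (hy.rel_proj t a))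
  exact orbitRel_apply.1 <|
    (orbitRel G α).trans (orbitRel_apply.2 hb) ((orbitRel G α).symm (hy.proj_mem_orbit t a))

theorem proj_smul (t : α) (g : G) (a : α) : hy.proj t (g • a) = g • hy.proj t a :=
  (hy.eq_proj (mem_orbit_of_mem_orbit g (hy.proj_mem_orbit t a))
    (hy.smul_rel g _ _ (hy.rel_proj t a))).symm

theorem rel_iff_proj_eq (t : α) {a b : α} : y a b ↔ hy.proj t a = hy.proj t b :=
  ⟨fun hab => (hy.eq_proj (hy.proj_mem_orbit t b) (y.trans hab (hy.rel_proj t b))).symm,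
    fun h => y.trans (hy.rel_proj t a) (h ▸ y.symm (hy.rel_proj t b))⟩

noncomputable def equivProd (t : α) : α ≃ orbit G t × orbitRel.Quotient G α where
  toFun a := (⟨hy.proj t a, hy.proj_mem_orbit t a⟩, ⟦a⟧)
  invFun p := hy.proj p.2.out p.1
  left_inv a :=
    (hy.eq_proj (orbitRel_apply.1 ((orbitRel G α).symm (Quotient.mk_out a)))
      (y.symm (hy.rel_proj t a))).symm
  right_inv p := by
    refine Prod.ext (Subtype.ext ?_) ?_
    · exact (hy.eq_proj p.1.2 (y.symm (hy.rel_proj _ _))).symm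
    · exact (Quotient.sound (orbitRel_apply.2 (hy.proj_mem_orbit _ _))).trans p.2.out_eq

theorem equivProd_smul (t : α) (g : G) (a : α) :
    hy.equivProd t (g • a) = (g • (hy.equivProd t a).1, (hy.equivProd t a).2) :=
  Prod.ext (Subtype.ext (hy.proj_smul t g a)) (Quotient.sound (mem_orbit a g))

theorem rel_iff_equivProd_fst_eq (t : α) {a b : α} :
    y a b ↔ (hy.equivProd t a).1 = (hy.equivProd t b).1 := by
  rw [hy.rel_iff_proj_eq t, Subtype.ext_iff]
  rfl

end IsOrbitComplement

theorem IsOrbitComplement.exists_perm_smul_comm_and_eq_comap {y z : Setoid α}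
    (hy : IsOrbitComplement G y) (hz : IsOrbitComplement G z) :
    ∃ σ : Equiv.Perm α, (∀ (g : G) (a : α), σ (g • a) = g • σ a) ∧ z = Setoid.comap σ.symm y := by
  rcases isEmpty_or_nonempty α with _ | ⟨⟨t⟩⟩
  · exact ⟨1, fun _ a => isEmptyElim a, Setoid.ext fun a => isEmptyElim a⟩
  let σ := (hy.equivProd t).trans (hz.equivProd t).symm
  refine ⟨σ, fun g a => (hz.equivProd t).injective ?_, Setoid.ext fun a b => ?_⟩
  · simp [σ, hz.equivProd_smul, hy.equivProd_smul]
  · simp [σ, hz.rel_iff_equivProd_fst_eq t, hy.rel_iff_equivProd_fst_eq t, Setoid.comap_rel]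

end MulAction

theorem stmt8_general (n : ℕ) (G : Subgroup (Equiv.Perm (Fin n))) :
    ∀ y z : Setoid (Fin n),
      ((∀ (g : G) (a b : Fin n), y.r a b → y.r (g • a) (g • b)) ∧
        MulAction.orbitRel G (Fin n) ⊓ y = ⊥ ∧
        MulAction.orbitRel G (Fin n) ⊔ y = ⊤) →
      ((∀ (g : G) (a b : Fin n), z.r a b → z.r (g • a) (g • b)) ∧
        MulAction.orbitRel G (Fin n) ⊓ z = ⊥ ∧
        MulAction.orbitRel G (Fin n) ⊔ z = ⊤) →
      ∃ σ ∈ Subgroup.normalizer (G : Set (Equiv.Perm (Fin n))), z = Setoid.comap σ.symm y := by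
  rintro y z ⟨hy_smul, hy_inf, hy_sup⟩ ⟨hz_smul, hz_inf, hz_sup⟩
  obtain ⟨σ, hσ, rfl⟩ := IsOrbitComplement.exists_perm_smul_comm_and_eq_comap
    ⟨hy_smul, hy_inf, hy_sup⟩ ⟨hz_smul, hz_inf, hz_sup⟩
  have hσ_mem : σ ∈ Subgroup.centralizer (G : Set (Equiv.Perm (Fin n))) :=
    Subgroup.mem_centralizer_iff.2 fun g hg => Equiv.ext fun a => (hσ ⟨g, hg⟩ a).symm
  exact ⟨σ, Subgroup.centralizer_le_normalizer _ hσ_mem, rfl⟩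

/-- let `G ⊆ Σ_n` act isotypically (all orbits are isomorphic as
`G`-sets) and non-transitively on `{1,…,n}`, let `x` be the partition into
`G`-orbits, and let `x^⊥` be the set of `G`-invariant partitions `y` with
`x ⊓ y = ⊥` and `x ⊔ y = ⊤`.  Then the normalizer `N_{Σ_n}(G)` acts transitively
on `x^⊥` (a permutation `σ` sends a partition `y` to the partition
`a ∼ b ↔ y (σ⁻¹ a) (σ⁻¹ b)`, i.e. to `Setoid.comap σ.symm y`). -/
theorem stmt8 (n : ℕ) (G : Subgroup (Equiv.Perm (Fin n)))
    (hiso : ∀ a b : Fin n,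
      ∃ e : MulAction.orbit G a ≃ MulAction.orbit G b,
        ∀ (g : G) (x : Fin n) (hx : x ∈ MulAction.orbit G a)
          (hgx : g • x ∈ MulAction.orbit G a),
          (e ⟨g • x, hgx⟩ : Fin n) = g • (e ⟨x, hx⟩ : Fin n))
    (hnontr : ¬ MulAction.IsPretransitive G (Fin n)) :
    ∀ y z : Setoid (Fin n),
      ((∀ (g : G) (a b : Fin n), y.r a b → y.r (g • a) (g • b)) ∧
        MulAction.orbitRel G (Fin n) ⊓ y = ⊥ ∧
        MulAction.orbitRel G (Fin n) ⊔ y = ⊤) →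
      ((∀ (g : G) (a b : Fin n), z.r a b → z.r (g • a) (g • b)) ∧
        MulAction.orbitRel G (Fin n) ⊓ z = ⊥ ∧
        MulAction.orbitRel G (Fin n) ⊔ z = ⊤) →
      ∃ σ ∈ Subgroup.normalizer (G : Set (Equiv.Perm (Fin n))), z = Setoid.comap σ.symm y :=
  stmt8_general n G
end

section
/- Let d | n, let Σ_d be embedded diagonally in Σ_n (acting on n = d·(n/d) elements arranged in n/d blocks of size d), and let G ⊆ Σ_d be a subgroup. If σ ∈ Σ_n conjugates G into a subgroup of Σ_d, then there exists η ∈ Σ_d such that conjugation by η agrees with conjugation by σ as automorphisms of G. -/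
/-- The diagonal embedding `Σ_d → Σ_n` for `n = m·d`: we identify `{1,…,n}` with
`m` disjoint blocks of size `d`, i.e. with `Fin m × Fin d`, and let a permutation
of `Fin d` act identically on each block. -/
def diagEmb (m d : ℕ) : Equiv.Perm (Fin d) →* Equiv.Perm (Fin m × Fin d) where
  toFun π := Equiv.prodCongr (Equiv.refl (Fin m)) π
  map_one' := by
    ext x
    · simp
    · simp
  map_mul' a b := by
    ext x
    · simp
    · simp

/-!
Conjugation by `σ` turns the inclusion `G ≤ Σ_d` into a second permutation representation `ρ`
of `G` on `Fin d`, and `σ` is an isomorphism between the `m`-fold diagonal copies of the two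
representations. Hence every subgroup `H ≤ G` has the same number of fixed points (the same
*mark*) in both. Finite `G`-sets with the same marks are isomorphic, as in Burnside's theory of
marks: an orbit whose stabilizer `S` is maximal has a partner orbit with stabilizer exactly `S`
on the other side; these two orbits are isomorphic, and removing them preserves the equality of
marks. An isomorphism `η` of the two `G`-sets on `Fin d` is a permutation with `ρ g = η⁻¹ g η`.

Representations are homomorphisms `G →* Perm X` rather than `MulAction` instances, since two
different actions on `Fin d` are compared.
-/

open Equiv Finset

theorem Set.BijOn.piecewise_union {α β : Type*} {s s' : Set α} {t t' : Set β} {f f' : α → β}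
    [∀ x, Decidable (x ∈ s)] (hf : Set.BijOn f s t) (hf' : Set.BijOn f' s' t')
    (hs : Disjoint s s') (ht : Disjoint t t') :
    Set.BijOn (s.piecewise f f') (s ∪ s') (t ∪ t') := by
  have h₁ := hf.congr (s.piecewise_eqOn f f').symm
  have h₂ := hf'.congr ((s.piecewise_eqOn_compl f f').mono hs.subset_compl_left).symm
  refine h₁.union h₂ ((Set.injOn_union hs).2 ⟨h₁.injOn, h₂.injOn, fun x hx x' hx' => ?_⟩)
  exact ht.ne_of_mem (h₁.mapsTo hx) (h₂.mapsTo hx')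

namespace PermRep

variable {G X Y : Type*} [Group G] (a : G →* Perm X) (b : G →* Perm Y)

def stabilizer (x : X) : Subgroup G := (MulAction.stabilizer (Perm X) x).comap a

def orbit (x : X) : Set X := Set.range fun g => a g x

open scoped Classical in
noncomputable def mark (A : Finset X) (H : Subgroup G) : ℕ := #{x ∈ A | H ≤ stabilizer a x}

variable {a b}

theorem mem_stabilizer {g : G} {x : X} : g ∈ stabilizer a x ↔ a g x = x := Iff.rfl

theorem apply_eq_apply_iff {g h : G} {x : X} : a g x = a h x ↔ g⁻¹ * h ∈ stabilizer a x := by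
  rw [mem_stabilizer, map_mul, Perm.mul_apply, map_inv, Perm.inv_eq_iff_eq, eq_comm]

theorem apply_mem_orbit_iff {g : G} {x y : X} : a g y ∈ orbit a x ↔ y ∈ orbit a x := by
  refine ⟨fun ⟨h, hh⟩ => ⟨g⁻¹ * h, ?_⟩, fun ⟨h, hh⟩ => ⟨g * h, ?_⟩⟩
  · simp only [map_mul, Perm.mul_apply, hh, map_inv, Perm.coe_inv, symm_apply_apply]
  · simp only [map_mul, Perm.mul_apply, ← hh]

theorem mem_orbit_self (x : X) : x ∈ orbit a x := ⟨1, by simp⟩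

theorem orbit_subset {A : Set X} (hA : ∀ g, Set.MapsTo (a g) A A) {x : X} (hx : x ∈ A) :
    orbit a x ⊆ A := by
  rintro _ ⟨g, rfl⟩
  exact hA g hx

theorem exists_bijOn_orbit {x : X} {y : Y} (h : stabilizer a x = stabilizer b y) :
    ∃ f : X → Y, Set.BijOn f (orbit a x) (orbit b y) ∧
      ∀ g, ∀ z ∈ orbit a x, f (a g z) = b g (f z) := by
  have hfactor : (fun g => b g y).FactorsThrough (fun g => a g x) := fun g g' hgg' => by
    rw [apply_eq_apply_iff, h, ← apply_eq_apply_iff] at hgg'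
    exact hgg'
  set f := Function.extend (fun g => a g x) (fun g => b g y) fun _ => y
  have hf : ∀ g, f (a g x) = b g y := hfactor.extend_apply _
  refine ⟨f, ⟨?_, ?_, ?_⟩, ?_⟩
  · rintro _ ⟨g, rfl⟩
    exact ⟨g, (hf g).symm⟩
  · rintro _ ⟨g, rfl⟩ _ ⟨g', rfl⟩ hgg'
    simp only [hf] at hgg'
    rwa [apply_eq_apply_iff, ← h, ← apply_eq_apply_iff] at hgg'
  · rintro _ ⟨g, rfl⟩
    exact ⟨a g x, ⟨g, rfl⟩, hf g⟩
  · rintro g _ ⟨g', rfl⟩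
    rw [← Perm.mul_apply, ← map_mul, hf, hf, map_mul, Perm.mul_apply]

theorem mark_bot (A : Finset X) : mark a A ⊥ = #A := by
  simp [mark]

theorem mark_pos_iff {A : Finset X} {H : Subgroup G} :
    0 < mark a A H ↔ ∃ x ∈ A, H ≤ stabilizer a x := by
  simp [mark, Finset.card_pos, Finset.filter_nonempty_iff]

theorem mark_filter_add_mark_filter_not (A : Finset X) (p : X → Prop) [DecidablePred p]
    (H : Subgroup G) :
    mark a {x ∈ A | p x} H + mark a {x ∈ A | ¬ p x} H = mark a A H := by
  classical
  simp only [mark, ← card_filter_add_card_filter_not (s := {x ∈ A | H ≤ stabilizer a x}) p,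
    filter_filter, and_comm]

theorem stabilizer_eq_of_bijOn {A : Finset X} {B : Finset Y} (hA : ∀ g, Set.MapsTo (a g) A A)
    {f : X → Y} (hf : Set.BijOn f A B) (hfa : ∀ g, ∀ x ∈ A, f (a g x) = b g (f x))
    {x : X} (hx : x ∈ A) : stabilizer b (f x) = stabilizer a x := by
  ext g
  rw [mem_stabilizer, mem_stabilizer, ← hfa g x hx]
  exact hf.injOn.eq_iff (hA g hx) hx

theorem mark_eq_of_bijOn {A : Finset X} {B : Finset Y} (hA : ∀ g, Set.MapsTo (a g) A A)
    {f : X → Y} (hf : Set.BijOn f A B) (hfa : ∀ g, ∀ x ∈ A, f (a g x) = b g (f x))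
    (H : Subgroup G) : mark a A H = mark b B H := by
  classical
  have hstab := fun {x} => stabilizer_eq_of_bijOn hA hf hfa (x := x)
  refine card_nbij f (fun x hx => ?_) (fun x hx x' hx' => ?_) (fun y hy => ?_)
  · simp only [coe_filter, Set.mem_ofPred_eq] at hx ⊢
    exact ⟨hf.mapsTo hx.1, hstab hx.1 ▸ hx.2⟩
  · simp only [coe_filter, Set.mem_ofPred_eq] at hx hx'
    exact hf.injOn hx.1 hx'.1
  · simp only [coe_filter, Set.mem_ofPred_eq] at hy
    obtain ⟨x, hx, rfl⟩ := hf.surjOn hy.1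
    exact ⟨x, by simpa using ⟨hx, hstab hx ▸ hy.2⟩, rfl⟩

theorem exists_stabilizer_eq {A : Finset X} {B : Finset Y} (hne : A.Nonempty)
    (hmark : ∀ H, mark a A H = mark b B H) :
    ∃ x ∈ A, ∃ y ∈ B, stabilizer a x = stabilizer b y := by
  obtain ⟨x, hxA, hmax⟩ := exists_maximalFor (stabilizer a) A hne
  obtain ⟨y, hyB, hxy⟩ := mark_pos_iff.1 <| hmark (stabilizer a x) ▸ mark_pos_iff.2 ⟨x, hxA, le_rfl⟩
  obtain ⟨z, hzA, hyz⟩ := mark_pos_iff.1 <| (hmark (stabilizer b y)).symm ▸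
    mark_pos_iff.2 ⟨y, hyB, le_rfl⟩
  exact ⟨x, hxA, y, hyB, hxy.antisymm (hyz.trans (hmax hzA (hxy.trans hyz)))⟩

theorem mapsTo_filter {A : Finset X} (hA : ∀ g, Set.MapsTo (a g) A A) {p : X → Prop}
    [DecidablePred p] (hp : ∀ g z, p (a g z) ↔ p z) (g : G) :
    Set.MapsTo (a g) (A.filter p) (A.filter p) := by
  intro z hz
  simp only [coe_filter, Set.mem_ofPred_eq] at hz ⊢
  exact ⟨hA g hz.1, (hp g z).2 hz.2⟩

theorem coe_filter_mem_orbit {A : Finset X} (hA : ∀ g, Set.MapsTo (a g) A A) {x : X}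
    (hx : x ∈ A) [DecidablePred (· ∈ orbit a x)] :
    (A.filter (· ∈ orbit a x) : Set X) = orbit a x := by
  ext z
  simp only [coe_filter, Set.mem_ofPred_eq]
  exact and_iff_right_of_imp fun hz => orbit_subset hA hx hz

theorem coe_eq_orbit_union {A : Finset X} (hA : ∀ g, Set.MapsTo (a g) A A) {x : X}
    (hx : x ∈ A) [DecidablePred (· ∉ orbit a x)] :
    (A : Set X) = orbit a x ∪ ↑(A.filter (· ∉ orbit a x)) := by
  ext z
  have hsub : z ∈ orbit a x → z ∈ A := fun hz => orbit_subset hA hx hz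
  simp only [coe_filter, Set.mem_union, Set.mem_ofPred_eq, mem_coe]
  tauto

theorem exists_bijOn_of_mark_eq [Nonempty Y] (A : Finset X) (B : Finset Y)
    (hA : ∀ g, Set.MapsTo (a g) A A) (hB : ∀ g, Set.MapsTo (b g) B B)
    (hmark : ∀ H, mark a A H = mark b B H) :
    ∃ f : X → Y, Set.BijOn f A B ∧ ∀ g, ∀ x ∈ A, f (a g x) = b g (f x) := by
  classical
  induction A using Finset.strongInduction generalizing B with
  | H A ih =>
  rcases A.eq_empty_or_nonempty with rfl | hne
  · have hB : B = ∅ := by simpa [mark_bot, eq_comm] using hmark ⊥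
    exact ⟨fun _ => Classical.arbitrary Y, by simp [hB], by simp⟩
  obtain ⟨x, hxA, y, hyB, hxy⟩ := exists_stabilizer_eq hne hmark
  obtain ⟨f₀, hf₀, hf₀a⟩ := exists_bijOn_orbit hxy
  have hmark' (H : Subgroup G) :
      mark a {z ∈ A | z ∉ orbit a x} H = mark b {z ∈ B | z ∉ orbit b y} H := by
    have hA₀ := mark_filter_add_mark_filter_not (a := a) A (· ∈ orbit a x) H
    have hB₀ := mark_filter_add_mark_filter_not (a := b) B (· ∈ orbit b y) H
    have horbit : mark a {z ∈ A | z ∈ orbit a x} H = mark b {z ∈ B | z ∈ orbit b y} H := by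
      refine mark_eq_of_bijOn (f := f₀) (mapsTo_filter hA fun _ _ => apply_mem_orbit_iff) ?_ ?_ H
      · rwa [coe_filter_mem_orbit hA hxA, coe_filter_mem_orbit hB hyB]
      · exact fun g z hz => hf₀a g z (by simpa using (mem_filter.1 hz).2)
    have := hmark H
    omega
  obtain ⟨f', hf', hf'a⟩ := ih _ (filter_ssubset.2 ⟨x, hxA, not_not.2 (mem_orbit_self x)⟩) _
    (mapsTo_filter hA fun _ _ => apply_mem_orbit_iff.not)
    (mapsTo_filter hB fun _ _ => apply_mem_orbit_iff.not) hmark'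
  refine ⟨(orbit a x).piecewise f₀ f', ?_, fun g z hz => ?_⟩
  · rw [coe_eq_orbit_union hA hxA, coe_eq_orbit_union hB hyB]
    exact hf₀.piecewise_union hf' (Set.disjoint_left.2 fun z hz hz' => (mem_filter.1 hz').2 hz)
      (Set.disjoint_left.2 fun z hz hz' => (mem_filter.1 hz').2 hz)
  · by_cases hzx : z ∈ orbit a x
    · rw [Set.piecewise_eq_of_mem _ _ _ hzx,
        Set.piecewise_eq_of_mem _ _ _ (apply_mem_orbit_iff.2 hzx), hf₀a g z hzx]
    · rw [Set.piecewise_eq_of_notMem _ _ _ hzx,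
        Set.piecewise_eq_of_notMem _ _ _ (apply_mem_orbit_iff.not.2 hzx)]
      exact hf'a g z (mem_filter.2 ⟨hz, hzx⟩)

theorem mark_univ_eq_of_equiv [Fintype X] [Fintype Y] (e : X ≃ Y)
    (he : ∀ g x, e (a g x) = b g (e x)) (H : Subgroup G) : mark a univ H = mark b univ H :=
  mark_eq_of_bijOn (by simp)
    (by simpa only [coe_univ, Set.bijOn_univ] using e.bijective) (fun g x _ => he g x) H

theorem exists_equiv_of_mark_eq [Fintype X] [Fintype Y]
    (hmark : ∀ H, mark a univ H = mark b univ H) :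
    ∃ e : X ≃ Y, ∀ g x, e (a g x) = b g (e x) := by
  cases isEmpty_or_nonempty Y with
  | inl hY =>
    have : IsEmpty X := by
      rw [← Fintype.card_eq_zero_iff, ← Fintype.card_eq_zero_iff.2 hY]
      simpa only [mark_bot, card_univ] using hmark ⊥
    exact ⟨Equiv.equivOfIsEmpty X Y, fun _ x => isEmptyElim x⟩
  | inr hY =>
    obtain ⟨f, hf, hfa⟩ := exists_bijOn_of_mark_eq univ univ (by simp) (by simp) hmark
    rw [coe_univ, coe_univ, Set.bijOn_univ] at hf
    exact ⟨Equiv.ofBijective f hf, fun g x => hfa g x (mem_univ x)⟩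

theorem stabilizer_diagEmb_comp (m : ℕ) {d : ℕ} (a : G →* Perm (Fin d)) (p : Fin m × Fin d) :
    stabilizer ((diagEmb m d).comp a) p = stabilizer a p.2 := by
  ext g
  simp [mem_stabilizer, diagEmb, Prod.ext_iff]

theorem mark_diagEmb_comp (m : ℕ) {d : ℕ} (a : G →* Perm (Fin d)) (H : Subgroup G) :
    mark ((diagEmb m d).comp a) univ H = m * mark a univ H := by
  classical
  have hfilter :
      {p ∈ (univ : Finset (Fin m × Fin d)) | H ≤ stabilizer ((diagEmb m d).comp a) p} =
        (univ : Finset (Fin m)) ×ˢ {x ∈ (univ : Finset (Fin d)) | H ≤ stabilizer a x} := by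
    ext p
    simp [stabilizer_diagEmb_comp]
  rw [mark, mark, hfilter, card_product, card_univ, Fintype.card_fin]

end PermRep

theorem MonoidHom.exists_lift_of_range_le {H K L : Type*} [Group H] [Group K] [Group L]
    {φ : K →* L} (hφ : Function.Injective φ) {ψ : H →* L} (h : ψ.range ≤ φ.range) :
    ∃ ρ : H →* K, ∀ g, φ (ρ g) = ψ g :=
  ⟨(MonoidHom.ofInjective hφ).symm.toMonoidHom.comp (ψ.codRestrict φ.range fun g => h ⟨g, rfl⟩),
    fun g => by simp⟩

theorem diagEmb_injective {m : ℕ} (d : ℕ) (hm : 0 < m) : Function.Injective (diagEmb m d) :=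
  fun _ _ h => Equiv.ext fun x =>
    congrArg Prod.snd (congrFun (congrArg DFunLike.coe h) (⟨0, hm⟩, x))

open PermRep

/-- let `d ∣ n` (here `n = m·d`), let `Σ_d` be embedded diagonally in
`Σ_n`, and let `G ⊆ Σ_d` be a subgroup.  If `σ ∈ Σ_n` conjugates (the image of)
`G` into (the image of) `Σ_d`, then there exists `η ∈ Σ_d` such that conjugation
by `η` agrees with conjugation by `σ` on `G`. -/
theorem stmt9 (m d : ℕ) (G : Subgroup (Equiv.Perm (Fin d)))
    (σ : Equiv.Perm (Fin m × Fin d))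
    (hσ : ∀ g ∈ G, ∃ h : Equiv.Perm (Fin d), σ⁻¹ * diagEmb m d g * σ = diagEmb m d h) :
    ∃ η : Equiv.Perm (Fin d), ∀ g ∈ G,
      σ⁻¹ * diagEmb m d g * σ = diagEmb m d (η⁻¹ * g * η) := by
  rcases Nat.eq_zero_or_pos m with rfl | hm
  · exact ⟨1, fun _ _ => Subsingleton.elim _ _⟩
  obtain ⟨ρ, hρ⟩ := MonoidHom.exists_lift_of_range_le (diagEmb_injective d hm)
    (ψ := (MulAut.conj σ⁻¹).toMonoidHom.comp ((diagEmb m d).comp G.subtype))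
    (by rintro _ ⟨g, rfl⟩; obtain ⟨h, hh⟩ := hσ g g.2; exact ⟨h, by simp [hh]⟩)
  simp only [MonoidHom.comp_apply, MulEquiv.coe_toMonoidHom, MulAut.conj_apply, inv_inv,
    Subgroup.coe_subtype] at hρ
  have hmark (H : Subgroup G) : mark ρ univ H = mark G.subtype univ H := by
    refine Nat.eq_of_mul_eq_mul_left hm ?_
    rw [← mark_diagEmb_comp, ← mark_diagEmb_comp]
    refine mark_univ_eq_of_equiv σ (fun g p => ?_) H
    simp [hρ]
  obtain ⟨η, hη⟩ := exists_equiv_of_mark_eq hmark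
  refine ⟨η, fun g hg => ?_⟩
  rw [← hρ ⟨g, hg⟩, mul_assoc]
  congr 1
  rw [eq_inv_mul_iff_mul_eq]
  exact Equiv.ext (hη ⟨g, hg⟩)
end

section
/- Let G ⊆ Σ_d ⊆ W ⊆ Σ_n with Σ_d embedded diagonally and W an intermediate subgroup. Then the inclusion of the centralizer C_W(G) into N_W(G; Σ_d) := {w ∈ W : w⁻¹Gw ⊆ Σ_d} induces a bijection C_W(G)/C_{Σ_d}(G) ≅ N_W(G; Σ_d)/Σ_d of coset spaces. -/
/-- The setoid of right `Δ`-cosets on a subset `N ⊆ A`: `w ∼ w'` iff `w' = w·δ`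
for some `δ ∈ Δ`. -/
def rightCosetSetoid (A : Type) [Group A] (Δ : Subgroup A) (N : Set A) :
    Setoid ↥N where
  r w w' := ∃ δ ∈ Δ, (w' : A) = (w : A) * δ
  iseqv := by
    refine ⟨fun w => ⟨1, Δ.one_mem, by simp⟩, ?_, ?_⟩
    · rintro w w' ⟨δ, hδ, h⟩
      exact ⟨δ⁻¹, Δ.inv_mem hδ, by rw [h, mul_inv_cancel_right]⟩
    · rintro a b c ⟨δ, hδ, h1⟩ ⟨ε, hε, h2⟩
      exact ⟨δ * ε, Δ.mul_mem hδ hε, by rw [h2, h1, mul_assoc]⟩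

/-- The image `Ĝ ⊆ Σ_n` of `G ⊆ Σ_d` under the diagonal embedding. -/
def Ghat (m d : ℕ) (G : Subgroup (Equiv.Perm (Fin d))) :
    Subgroup (Equiv.Perm (Fin m × Fin d)) := G.map (diagEmb m d)

/-- The centralizer `C_W(G)` of (the diagonal image of) `G` in `W`. -/
def CW (m d : ℕ) (G : Subgroup (Equiv.Perm (Fin d)))
    (W : Subgroup (Equiv.Perm (Fin m × Fin d))) :
    Subgroup (Equiv.Perm (Fin m × Fin d)) :=
  Subgroup.centralizer (Ghat m d G : Set (Equiv.Perm (Fin m × Fin d))) ⊓ W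

/-- The set `N_W(G; Σ_d) = {w ∈ W : w⁻¹ Ĝ w ⊆ Δ}` of elements of `W` conjugating
`G` into the diagonal `Σ_d`. -/
def NWGd (m d : ℕ) (G : Subgroup (Equiv.Perm (Fin d)))
    (W : Subgroup (Equiv.Perm (Fin m × Fin d))) :
    Set (Equiv.Perm (Fin m × Fin d)) :=
  {w | w ∈ W ∧ ∀ g ∈ Ghat m d G, w⁻¹ * g * w ∈ (diagEmb m d).range}

section Aux

variable {Γ : Type*} [Group Γ] {X : Type*}

/-- conjugacy setoid on subsets of a group -/
def conjSetoid (Γ : Type*) [Group Γ] : Setoid (Set Γ) where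
  r s s' := ∃ g : Γ, s' = (fun h => g * h * g⁻¹) '' s
  iseqv := by
    refine ⟨fun s => ⟨1, by ext h; simp⟩, ?_, ?_⟩
    · rintro s s' ⟨g, rfl⟩
      refine ⟨g⁻¹, ?_⟩
      rw [Set.image_image]
      ext h; simp [mul_assoc]
    · rintro s s' s'' ⟨g, rfl⟩ ⟨g', rfl⟩
      refine ⟨g' * g, ?_⟩
      rw [Set.image_image]
      ext h; simp [mul_assoc]

lemma rho_mul_apply (ρ : Γ →* Equiv.Perm X) (g h : Γ) (x : X) :
    ρ (g * h) x = ρ g (ρ h x) := by rw [map_mul]; rfl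

def stab (ρ : Γ →* Equiv.Perm X) (x : X) : Set Γ := {g | ρ g x = x}

lemma mem_stab {ρ : Γ →* Equiv.Perm X} {x : X} {g : Γ} : g ∈ stab ρ x ↔ ρ g x = x := Iff.rfl

lemma stab_conj (ρ : Γ →* Equiv.Perm X) (g : Γ) (x : X) :
    stab ρ (ρ g x) = (fun h => g * h * g⁻¹) '' stab ρ x := by
  have key : ∀ h, h ∈ stab ρ x ↔ g * h * g⁻¹ ∈ stab ρ (ρ g x) := by
    intro h
    have : ρ (g * h * g⁻¹) (ρ g x) = ρ g (ρ h x) := by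
      rw [← rho_mul_apply, ← rho_mul_apply]
      congr 1
      group
    rw [mem_stab, mem_stab, this]
    exact ⟨fun h' => by rw [h'], fun h' => (ρ g).injective h'⟩
  ext h
  constructor
  · intro hh
    refine ⟨g⁻¹ * h * g, ?_, by group⟩
    rw [key]
    convert hh using 2
    group
  · rintro ⟨h₀, hh₀, rfl⟩
    exact (key h₀).mp hh₀

def orbSetoid (ρ : Γ →* Equiv.Perm X) : Setoid X where
  r x y := ∃ g : Γ, ρ g x = y
  iseqv := by
    refine ⟨fun x => ⟨1, by simp⟩, ?_, ?_⟩
    · rintro x y ⟨g, rfl⟩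
      exact ⟨g⁻¹, by rw [← rho_mul_apply]; simp⟩
    · rintro x y z ⟨g, rfl⟩ ⟨h, rfl⟩
      exact ⟨h * g, by rw [rho_mul_apply]⟩

def tag (ρ : Γ →* Equiv.Perm X) : Quotient (orbSetoid ρ) → Quotient (conjSetoid Γ) :=
  Quotient.lift (fun x => Quotient.mk (conjSetoid Γ) (stab ρ x)) (by
    rintro x y ⟨g, rfl⟩
    exact Quotient.sound ⟨g, stab_conj ρ g x⟩)

lemma tag_mk (ρ : Γ →* Equiv.Perm X) (x : X) :
    tag ρ (Quotient.mk (orbSetoid ρ) x) = Quotient.mk (conjSetoid Γ) (stab ρ x) := rfl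

/-- cancellation of `Fin m ×` for tagged bijections -/
lemma fiber_matching {A B T : Type*} [Finite A] [Finite B] {m : ℕ} (hm : 0 < m)
    (f : A → T) (g : B → T) (Φ : (Fin m × A) ≃ (Fin m × B))
    (hΦ : ∀ p, g (Φ p).2 = f p.2) :
    ∃ ψ : A ≃ B, ∀ a, g (ψ a) = f a := by
  have key : ∀ t : T, Nonempty ({a // f a = t} ≃ {b // g b = t}) := by
    intro t
    have e1 : {p : Fin m × A // f p.2 = t} ≃ {q : Fin m × B // g q.2 = t} :=
      Φ.subtypeEquiv (fun p => by rw [hΦ])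
    have e2 : (Fin m × {a // f a = t}) ≃ {p : Fin m × A // f p.2 = t} :=
      { toFun := fun x => ⟨(x.1, x.2.1), x.2.2⟩
        invFun := fun x => (x.1.1, ⟨x.1.2, x.2⟩)
        left_inv := fun x => rfl
        right_inv := fun x => rfl }
    have e3 : (Fin m × {b // g b = t}) ≃ {q : Fin m × B // g q.2 = t} :=
      { toFun := fun x => ⟨(x.1, x.2.1), x.2.2⟩
        invFun := fun x => (x.1.1, ⟨x.1.2, x.2⟩)
        left_inv := fun x => rfl
        right_inv := fun x => rfl }
    have hcard : m * Nat.card {a // f a = t} = m * Nat.card {b // g b = t} := by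
      have h1 : Nat.card (Fin m × {a // f a = t}) = Nat.card (Fin m × {b // g b = t}) :=
        Nat.card_congr (e2.trans (e1.trans e3.symm))
      simpa [Nat.card_prod] using h1
    exact Finite.card_eq.mp (Nat.eq_of_mul_eq_mul_left hm hcard)
  exact ⟨Equiv.ofFiberEquiv (fun t => (key t).some), fun a => Equiv.ofFiberEquiv_map _ _⟩

end Aux

section Key

variable {Γ : Type*} [Group Γ] {X : Type*}

lemma mk_rho_eq (ρ : Γ →* Equiv.Perm X) (g : Γ) (x : X) :
    Quotient.mk (orbSetoid ρ) (ρ g x) = Quotient.mk (orbSetoid ρ) x :=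
  (Quotient.sound (s := orbSetoid ρ) (a := x) (b := ρ g x) ⟨g, rfl⟩).symm

lemma key_lemma {m : ℕ} (hm : 0 < m) [Finite X]
    (ρ₁ ρ₂ : Γ →* Equiv.Perm X) (w : Equiv.Perm (Fin m × X))
    (hw : ∀ (g : Γ) (p : Fin m × X), w (p.1, ρ₂ g p.2) = ((w p).1, ρ₁ g (w p).2)) :
    ∃ π : Equiv.Perm X, ∀ (g : Γ) (x : X), π (ρ₂ g x) = ρ₁ g (π x) := by
  classical
  have hw2 : ∀ (g : Γ) (b : Fin m) (x : X),
      w (b, ρ₂ g x) = ((w (b, x)).1, ρ₁ g ((w (b, x)).2)) := fun g b x => hw g (b, x)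
  -- w.symm is equivariant the other way
  have hw2' : ∀ (g : Γ) (b : Fin m) (x : X),
      w.symm (b, ρ₁ g x) = ((w.symm (b, x)).1, ρ₂ g ((w.symm (b, x)).2)) := by
    intro g b x
    apply w.injective
    rw [Equiv.apply_symm_apply, hw2, Equiv.apply_symm_apply]
  -- stabilizers match along w
  have hstab : ∀ (b : Fin m) (x : X), stab ρ₂ x = stab ρ₁ ((w (b, x)).2) := by
    intro b x
    ext g
    rw [mem_stab, mem_stab]
    constructor
    · intro h
      have := hw2 g b x
      rw [h] at this
      exact (congrArg Prod.snd this).symm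
    · intro h
      have h2 : w (b, ρ₂ g x) = w (b, x) := by
        rw [hw2 g b x, h]
      exact congrArg Prod.snd (w.injective h2)
  -- induced bijection on (Fin m) × orbit spaces
  let Q₂ := Quotient (orbSetoid ρ₂)
  let Q₁ := Quotient (orbSetoid ρ₁)
  let F : Fin m × Q₂ → Fin m × Q₁ := fun p =>
    Quotient.lift (fun x => ((w (p.1, x)).1, Quotient.mk (orbSetoid ρ₁) ((w (p.1, x)).2)))
      (by
        rintro x y ⟨g, rfl⟩
        show ((w (p.1, x)).1, Quotient.mk _ ((w (p.1, x)).2))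
          = ((w (p.1, ρ₂ g x)).1, Quotient.mk _ ((w (p.1, ρ₂ g x)).2))
        rw [hw2 g p.1 x]
        exact Prod.ext rfl (mk_rho_eq ρ₁ g _).symm) p.2
  let Fi : Fin m × Q₁ → Fin m × Q₂ := fun p =>
    Quotient.lift (fun y => ((w.symm (p.1, y)).1, Quotient.mk (orbSetoid ρ₂) ((w.symm (p.1, y)).2)))
      (by
        rintro x y ⟨g, rfl⟩
        show ((w.symm (p.1, x)).1, Quotient.mk _ ((w.symm (p.1, x)).2))
          = ((w.symm (p.1, ρ₁ g x)).1, Quotient.mk _ ((w.symm (p.1, ρ₁ g x)).2))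
        rw [hw2' g p.1 x]
        exact Prod.ext rfl (mk_rho_eq ρ₂ g _).symm) p.2
  have hFi : Function.LeftInverse Fi F := by
    rintro ⟨b, q⟩
    induction q using Quotient.ind with
    | _ x =>
      show Fi ((w (b, x)).1, Quotient.mk _ ((w (b, x)).2)) = (b, Quotient.mk _ x)
      show ((w.symm ((w (b,x)).1, (w (b,x)).2)).1, Quotient.mk _ ((w.symm ((w (b,x)).1, (w (b,x)).2)).2)) = _
      rw [show ((w (b,x)).1, (w (b,x)).2) = w (b,x) from rfl, Equiv.symm_apply_apply]
  have hFs : Function.RightInverse Fi F := by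
    rintro ⟨b, q⟩
    induction q using Quotient.ind with
    | _ y =>
      show F ((w.symm (b, y)).1, Quotient.mk _ ((w.symm (b, y)).2)) = (b, Quotient.mk _ y)
      show ((w ((w.symm (b,y)).1, (w.symm (b,y)).2)).1, Quotient.mk _ ((w ((w.symm (b,y)).1, (w.symm (b,y)).2)).2)) = _
      rw [show ((w.symm (b,y)).1, (w.symm (b,y)).2) = w.symm (b,y) from rfl, Equiv.apply_symm_apply]
  let Φ : (Fin m × Q₂) ≃ (Fin m × Q₁) := ⟨F, Fi, hFi, hFs⟩
  have hΦtag : ∀ p : Fin m × Q₂, tag ρ₁ (Φ p).2 = tag ρ₂ p.2 := by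
    rintro ⟨b, q⟩
    induction q using Quotient.ind with
    | _ x =>
      show tag ρ₁ (Quotient.mk _ ((w (b, x)).2)) = tag ρ₂ (Quotient.mk _ x)
      rw [tag_mk, tag_mk, ← hstab b x]
  obtain ⟨ψ, hψ⟩ := fiber_matching hm (tag ρ₂) (tag ρ₁) Φ hΦtag
  -- choose matched representatives with equal stabilizers
  have hyex : ∀ q : Q₂, ∃ y : X,
      stab ρ₂ q.out = stab ρ₁ y ∧ Quotient.mk (orbSetoid ρ₁) y = ψ q := by
    intro q
    have h1 : tag ρ₁ (Quotient.mk (orbSetoid ρ₁) (ψ q).out)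
        = tag ρ₂ (Quotient.mk (orbSetoid ρ₂) q.out) := by
      rw [Quotient.out_eq, Quotient.out_eq]; exact hψ q
    rw [tag_mk, tag_mk] at h1
    obtain ⟨g, hg⟩ := Quotient.exact h1
    refine ⟨ρ₁ g (ψ q).out, ?_, ?_⟩
    · rw [stab_conj, ← hg]
    · rw [mk_rho_eq, Quotient.out_eq]
  choose y hy1 hy2 using hyex
  -- choose group elements moving representatives onto given points
  have hgex : ∀ x : X, ∃ g : Γ, ρ₂ g (Quotient.mk (orbSetoid ρ₂) x).out = x := by
    intro x
    exact Quotient.exact (Quotient.out_eq (Quotient.mk (orbSetoid ρ₂) x))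
  choose gx hgx using hgex
  let π₀ : X → X := fun x => ρ₁ (gx x) (y (Quotient.mk (orbSetoid ρ₂) x))
  have spec : ∀ (q : Q₂) (g : Γ), π₀ (ρ₂ g q.out) = ρ₁ g (y q) := by
    intro q g
    have hq : Quotient.mk (orbSetoid ρ₂) (ρ₂ g q.out) = q := by
      rw [mk_rho_eq, Quotient.out_eq]
    show ρ₁ (gx (ρ₂ g q.out)) (y (Quotient.mk (orbSetoid ρ₂) (ρ₂ g q.out))) = _
    rw [hq]
    have h1 : ρ₂ (gx (ρ₂ g q.out)) q.out = ρ₂ g q.out := by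
      have := hgx (ρ₂ g q.out)
      rwa [hq] at this
    have h2 : g⁻¹ * gx (ρ₂ g q.out) ∈ stab ρ₂ q.out := by
      rw [mem_stab, rho_mul_apply, h1, ← rho_mul_apply]
      simp
    rw [hy1 q, mem_stab] at h2
    calc ρ₁ (gx (ρ₂ g q.out)) (y q)
        = ρ₁ (g * (g⁻¹ * gx (ρ₂ g q.out))) (y q) := by
          rw [show g * (g⁻¹ * gx (ρ₂ g q.out)) = gx (ρ₂ g q.out) by group]
      _ = ρ₁ g (y q) := by rw [rho_mul_apply, h2]
  have hequiv : ∀ (g : Γ) (x : X), π₀ (ρ₂ g x) = ρ₁ g (π₀ x) := by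
    intro g x
    have hx := hgx x
    have e1 : π₀ x = ρ₁ (gx x) (y (Quotient.mk (orbSetoid ρ₂) x)) := rfl
    have e2 : π₀ (ρ₂ g x) = ρ₁ (g * gx x) (y (Quotient.mk (orbSetoid ρ₂) x)) := by
      conv_lhs => rw [← hx, ← rho_mul_apply]
      exact spec _ _
    rw [e1, e2, rho_mul_apply]
  have key2 : ∀ (q : Q₂) (a b : Γ), ρ₂ (b⁻¹ * a) q.out = q.out → ρ₂ a q.out = ρ₂ b q.out := by
    intro q a b h
    have h' : ρ₂ (b * (b⁻¹ * a)) q.out = ρ₂ b q.out := by rw [rho_mul_apply, h]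
    rwa [show b * (b⁻¹ * a) = a by group] at h'
  have hinj : Function.Injective π₀ := by
    intro x x' h
    have h' : ρ₁ (gx x) (y (Quotient.mk (orbSetoid ρ₂) x))
        = ρ₁ (gx x') (y (Quotient.mk (orbSetoid ρ₂) x')) := h
    have horb : Quotient.mk (orbSetoid ρ₁) (y (Quotient.mk (orbSetoid ρ₂) x))
        = Quotient.mk (orbSetoid ρ₁) (y (Quotient.mk (orbSetoid ρ₂) x')) := by
      apply Quotient.sound
      exact ⟨(gx x')⁻¹ * gx x, by rw [rho_mul_apply, h', ← rho_mul_apply]; simp⟩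
    have hqq : Quotient.mk (orbSetoid ρ₂) x = Quotient.mk (orbSetoid ρ₂) x' :=
      ψ.injective (by rw [← hy2, ← hy2, horb])
    have h2 : ρ₁ ((gx x')⁻¹ * gx x) (y (Quotient.mk (orbSetoid ρ₂) x))
        = y (Quotient.mk (orbSetoid ρ₂) x) := by
      rw [rho_mul_apply, h', ← rho_mul_apply, hqq]
      simp
    have h3 : ρ₂ ((gx x')⁻¹ * gx x) (Quotient.mk (orbSetoid ρ₂) x).out
        = (Quotient.mk (orbSetoid ρ₂) x).out := by
      have hmem : (gx x')⁻¹ * gx x ∈ stab ρ₁ (y (Quotient.mk (orbSetoid ρ₂) x)) := h2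
      rw [← hy1] at hmem
      exact hmem
    calc x = ρ₂ (gx x) (Quotient.mk (orbSetoid ρ₂) x).out := (hgx x).symm
      _ = ρ₂ (gx x') (Quotient.mk (orbSetoid ρ₂) x).out := key2 _ _ _ h3
      _ = x' := by rw [hqq]; exact hgx x'
  have hsurj : Function.Surjective π₀ := by
    intro z
    obtain ⟨g, hg⟩ : ∃ g : Γ, ρ₁ g (y (ψ.symm (Quotient.mk (orbSetoid ρ₁) z))) = z := by
      apply Quotient.exact (s := orbSetoid ρ₁)
      rw [hy2, Equiv.apply_symm_apply]
    exact ⟨ρ₂ g (ψ.symm (Quotient.mk (orbSetoid ρ₁) z)).out, by rw [spec, hg]⟩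
  exact ⟨Equiv.ofBijective π₀ ⟨hinj, hsurj⟩, hequiv⟩

end Key

section Main

lemma diagEmb_apply (m d : ℕ) (π : Equiv.Perm (Fin d)) (p : Fin m × Fin d) :
    diagEmb m d π p = (p.1, π p.2) := rfl

lemma diagEmb_inj {m d : ℕ} (hm : 0 < m) : Function.Injective (diagEmb m d) := by
  intro a b h
  apply Equiv.ext
  intro x
  have := congrArg (fun σ : Equiv.Perm (Fin m × Fin d) => (σ (⟨0, hm⟩, x)).2) h
  simpa [diagEmb_apply] using this

lemma CW_subset (m d : ℕ) (G : Subgroup (Equiv.Perm (Fin d)))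
    (W : Subgroup (Equiv.Perm (Fin m × Fin d))) :
    ∀ c ∈ CW m d G W, c ∈ NWGd m d G W := by
  intro c hc
  obtain ⟨hcent, hcW⟩ := Subgroup.mem_inf.mp hc
  refine ⟨hcW, fun g hg => ?_⟩
  have h : g * c = c * g := Subgroup.mem_centralizer_iff.mp hcent g hg
  have h2 : c⁻¹ * g * c = g := by rw [mul_assoc, h, inv_mul_cancel_left]
  rw [h2]
  obtain ⟨g0, _, rfl⟩ := hg
  exact ⟨g0, rfl⟩

lemma decomp (m d : ℕ) (G : Subgroup (Equiv.Perm (Fin d)))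
    (W : Subgroup (Equiv.Perm (Fin m × Fin d)))
    (w : Equiv.Perm (Fin m × Fin d)) (hw : w ∈ NWGd m d G W) :
    ∃ c δ : Equiv.Perm (Fin m × Fin d),
      c ∈ Subgroup.centralizer (Ghat m d G : Set (Equiv.Perm (Fin m × Fin d))) ∧
      δ ∈ (diagEmb m d).range ∧ w = c * δ := by
  rcases Nat.eq_zero_or_pos m with hm | hm
  · subst hm
    have hE : IsEmpty (Fin 0 × Fin d) := ⟨fun p => p.1.elim0⟩
    refine ⟨w, 1, ?_, one_mem _, (mul_one w).symm⟩
    rw [Subgroup.mem_centralizer_iff]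
    intro g _
    exact Equiv.ext fun x => hE.elim x
  · have hrange : ∀ g : G, w⁻¹ * diagEmb m d (g : Equiv.Perm (Fin d)) * w ∈ (diagEmb m d).range :=
      fun g => hw.2 _ ⟨(g : Equiv.Perm (Fin d)), g.2, rfl⟩
    choose α hα using hrange
    have inj := diagEmb_inj (d := d) hm
    have hα1 : α 1 = 1 := inj (by rw [hα]; simp)
    have hαmul : ∀ g h : G, α (g * h) = α g * α h := by
      intro g h
      apply inj
      rw [map_mul, hα, hα, hα]
      push_cast
      rw [map_mul]
      group
    let ρ₂ : G →* Equiv.Perm (Fin d) := { toFun := α, map_one' := hα1, map_mul' := hαmul }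
    have hweq : ∀ (g : G) (p : Fin m × Fin d),
        w (p.1, ρ₂ g p.2) = ((w p).1, (Subgroup.subtype G) g ((w p).2)) := by
      intro g p
      have h1 : w * diagEmb m d (α g) = diagEmb m d (g : Equiv.Perm (Fin d)) * w := by
        rw [hα]; group
      have h2 := congrArg (fun σ : Equiv.Perm (Fin m × Fin d) => σ p) h1
      simp only [Equiv.Perm.mul_apply] at h2
      exact h2
    obtain ⟨π, hπ⟩ := key_lemma hm (Subgroup.subtype G) ρ₂ w hweq
    refine ⟨w * (diagEmb m d π)⁻¹, diagEmb m d π, ?_, ⟨π, rfl⟩, by group⟩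
    rw [Subgroup.mem_centralizer_iff]
    rintro g ⟨g0, hg0, rfl⟩
    set A := diagEmb m d π with hA
    set gh := diagEmb m d g0 with hgh
    -- π * α ⟨g0⟩ = g0 * π  as permutations
    have hcomm : π * α ⟨g0, hg0⟩ = g0 * π := by
      apply Equiv.ext
      intro x
      simp only [Equiv.Perm.mul_apply]
      exact hπ ⟨g0, hg0⟩ x
    have h : A * (w⁻¹ * gh * w) = gh * A := by
      have := hα ⟨g0, hg0⟩
      rw [show w⁻¹ * gh * w = w⁻¹ * diagEmb m d ((⟨g0, hg0⟩ : G) : Equiv.Perm (Fin d)) * w from rfl,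
        ← this, hA, ← map_mul, hcomm, map_mul]
    have h2 : w⁻¹ * gh * w = A⁻¹ * (gh * A) := eq_inv_mul_iff_mul_eq.mpr (by rw [← mul_assoc]; exact h)
    have h3 : gh * w = w * (A⁻¹ * (gh * A)) := by rw [← h2]; group
    calc gh * (w * A⁻¹) = (gh * w) * A⁻¹ := by group
      _ = (w * (A⁻¹ * (gh * A))) * A⁻¹ := by rw [h3]
      _ = w * A⁻¹ * gh := by group

end Main

/-- let `G ⊆ Σ_d ⊆ W ⊆ Σ_n` with `Σ_d` embedded diagonally and `W`
any intermediate subgroup.  Then the inclusion of the centralizer `C_W(G)` into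
`N_W(G; Σ_d)` induces a bijection `C_W(G)/C_{Σ_d}(G) ≃ N_W(G; Σ_d)/Σ_d` of coset
spaces. -/
theorem stmt10 (m d : ℕ) (G : Subgroup (Equiv.Perm (Fin d)))
    (W : Subgroup (Equiv.Perm (Fin m × Fin d)))
    (hW : (diagEmb m d).range ≤ W) :
    ∃ e : (CW m d G W ⧸ (CW m d G (diagEmb m d).range).subgroupOf (CW m d G W)) ≃
        Quotient (rightCosetSetoid (Equiv.Perm (Fin m × Fin d)) (diagEmb m d).range
          (NWGd m d G W)),
      ∀ (c : CW m d G W) (hc : (c : Equiv.Perm (Fin m × Fin d)) ∈ NWGd m d G W),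
        e (QuotientGroup.mk c) =
          Quotient.mk (rightCosetSetoid (Equiv.Perm (Fin m × Fin d)) (diagEmb m d).range
            (NWGd m d G W)) ⟨(c : Equiv.Perm (Fin m × Fin d)), hc⟩ := by



  classical
  let H := (CW m d G (diagEmb m d).range).subgroupOf (CW m d G W)
  let S := rightCosetSetoid (Equiv.Perm (Fin m × Fin d)) (diagEmb m d).range (NWGd m d G W)
  let f₀ : ↥(CW m d G W) → Quotient S :=
    fun c => Quotient.mk S ⟨(c : Equiv.Perm (Fin m × Fin d)), CW_subset m d G W _ c.2⟩
  have hresp : ∀ a b : ↥(CW m d G W),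
      @Setoid.r _ (QuotientGroup.leftRel H) a b → f₀ a = f₀ b := by
    intro a b hab
    rw [QuotientGroup.leftRel_apply] at hab
    have hab' : ((a⁻¹ * b : ↥(CW m d G W)) : Equiv.Perm (Fin m × Fin d))
        ∈ CW m d G (diagEmb m d).range := Subgroup.mem_subgroupOf.mp hab
    refine Quotient.sound ⟨(a : Equiv.Perm (Fin m × Fin d))⁻¹ * b,
      (Subgroup.mem_inf.mp hab').2, ?_⟩
    rw [mul_inv_cancel_left]
  let f : Quotient (QuotientGroup.leftRel H) → Quotient S := Quotient.lift f₀ hresp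
  have hinj : Function.Injective f := by
    intro x y
    refine Quotient.inductionOn₂ x y ?_
    intro a b h
    obtain ⟨δ, hδ, heq⟩ := Quotient.exact (h : f₀ a = f₀ b)
    have hmemδ : ((a⁻¹ * b : ↥(CW m d G W)) : Equiv.Perm (Fin m × Fin d))
        ∈ (diagEmb m d).range := by
      show (a : Equiv.Perm (Fin m × Fin d))⁻¹ * b ∈ (diagEmb m d).range
      have h5 : (a : Equiv.Perm (Fin m × Fin d))⁻¹ * b = δ := by
        rw [heq, inv_mul_cancel_left]
      rw [h5]
      exact hδ
    have hmemc : ((a⁻¹ * b : ↥(CW m d G W)) : Equiv.Perm (Fin m × Fin d))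
        ∈ Subgroup.centralizer (Ghat m d G : Set (Equiv.Perm (Fin m × Fin d))) :=
      Subgroup.mul_mem _ (Subgroup.inv_mem _ (Subgroup.mem_inf.mp a.2).1)
        (Subgroup.mem_inf.mp b.2).1
    exact Quotient.sound (QuotientGroup.leftRel_apply.mpr
      (Subgroup.mem_subgroupOf.mpr (Subgroup.mem_inf.mpr ⟨hmemc, hmemδ⟩)))
  have hsurj : Function.Surjective f := by
    intro x
    refine Quotient.inductionOn x ?_
    rintro ⟨v, hv⟩
    obtain ⟨c, δ, hcent, hδ, hvcδ⟩ := decomp m d G W v hv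
    have hcW : c ∈ W := by
      have hc' : c = v * δ⁻¹ := by rw [hvcδ]; group
      rw [hc']
      exact W.mul_mem hv.1 (W.inv_mem (hW hδ))
    refine ⟨Quotient.mk (QuotientGroup.leftRel H)
      (⟨c, Subgroup.mem_inf.mpr ⟨hcent, hcW⟩⟩ : ↥(CW m d G W)), ?_⟩
    exact Quotient.sound ⟨δ, hδ, hvcδ⟩
  exact ⟨Equiv.ofBijective f ⟨hinj, hsurj⟩, fun c hc => rfl⟩
end

section
/- The free Lie ring over ℤ (with antisymmetry and Jacobi, but without the alternating axiom) on one generator c has underlying abelian group ℤ ⊕ ℤ/2, generated by c in degree 1 and [c,c] in degree 2, with 2[c,c] = 0 and all longer brackets vanishing. -/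
/-- An "antisymmetric Lie ring": an abelian group with a biadditive bracket
satisfying antisymmetry `⁅x,y⁆ = −⁅y,x⁆` and the Jacobi identity, but *not*
necessarily the alternating axiom `⁅x,x⁆ = 0`. -/
class LieRingA (L : Type) extends AddCommGroup L, Bracket L L where
  add_lie : ∀ x y z : L, ⁅x + y, z⁆ = ⁅x, z⁆ + ⁅y, z⁆
  lie_add : ∀ x y z : L, ⁅x, y + z⁆ = ⁅x, y⁆ + ⁅x, z⁆
  lie_antisymm : ∀ x y : L, ⁅x, y⁆ = -⁅y, x⁆
  jacobi : ∀ x y z : L, ⁅x, ⁅y, z⁆⁆ + ⁅z, ⁅x, y⁆⁆ + ⁅y, ⁅z, x⁆⁆ = 0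

/-- The model: `ℤ × ZMod 2` with bracket `⁅(a,b),(a',b')⁆ = (0, a·a' mod 2)`. -/
instance modelBracket : Bracket (ℤ × ZMod 2) (ℤ × ZMod 2) :=
  ⟨fun p q => (0, ((p.1 * q.1 : ℤ) : ZMod 2))⟩

lemma model_bracket_def (p q : ℤ × ZMod 2) :
    ⁅p, q⁆ = ((0 : ℤ), ((p.1 * q.1 : ℤ) : ZMod 2)) := rfl

instance modelLieRingA : LieRingA (ℤ × ZMod 2) where
  add_lie x y z := by
    simp [model_bracket_def, Prod.ext_iff, add_mul]
  lie_add x y z := by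
    simp [model_bracket_def, Prod.ext_iff, mul_add]
  lie_antisymm x y := by
    rw [model_bracket_def, model_bracket_def, Prod.ext_iff]
    constructor
    · simp
    · simp [mul_comm, ZMod.neg_eq_self_mod_two]
  jacobi x y z := by
    simp [model_bracket_def, Prod.ext_iff]

/-- the free antisymmetric Lie ring over `ℤ` on one generator `c`
(characterized by its universal property) has underlying abelian group
`ℤ ⊕ ℤ/2`, generated by `c` and `⁅c,c⁆`, with `2⁅c,c⁆ = 0` and all longer
brackets vanishing. -/
theorem stmt16 (L : Type) [LieRingA L] (c : L)
    (hfree : ∀ (M : Type) [LieRingA M] (m : M),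
      ∃! φ : L →+ M, (∀ x y : L, φ ⁅x, y⁆ = ⁅φ x, φ y⁆) ∧ φ c = m) :
    (∃ e : L ≃+ ℤ × ZMod 2, e c = (1, 0) ∧ e ⁅c, c⁆ = (0, 1)) ∧
      (2 : ℤ) • ⁅c, c⁆ = 0 ∧
      ⁅c, ⁅c, c⁆⁆ = 0 ∧ ⁅⁅c, c⁆, c⁆ = 0 ∧ ⁅⁅c, c⁆, ⁅c, c⁆⁆ = 0 := by
  have add_lie := LieRingA.add_lie (L := L)
  have lie_add := LieRingA.lie_add (L := L)
  have antisymm := LieRingA.lie_antisymm (L := L)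
  have jacobi := LieRingA.jacobi (L := L)
  -- biadditivity as homs
  have lieR : ∀ y : L, ∃ f : L →+ L, ∀ x, f x = ⁅x, y⁆ := fun y =>
    ⟨AddMonoidHom.mk' (fun x => ⁅x, y⁆) (fun a b => add_lie a b y), fun _ => rfl⟩
  have lieL : ∀ x : L, ∃ f : L →+ L, ∀ y, f y = ⁅x, y⁆ := fun x =>
    ⟨AddMonoidHom.mk' (fun y => ⁅x, y⁆) (fun a b => lie_add x a b), fun _ => rfl⟩
  have zsmul_lie : ∀ (n : ℤ) (x y : L), ⁅n • x, y⁆ = n • ⁅x, y⁆ := by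
    intro n x y
    obtain ⟨f, hf⟩ := lieR y
    rw [← hf, ← hf, map_zsmul]
  have lie_zsmul : ∀ (n : ℤ) (x y : L), ⁅x, n • y⁆ = n • ⁅x, y⁆ := by
    intro n x y
    obtain ⟨f, hf⟩ := lieL x
    rw [← hf, ← hf, map_zsmul]
  have lie_zero : ∀ x : L, ⁅x, (0 : L)⁆ = 0 := by
    intro x
    obtain ⟨f, hf⟩ := lieL x
    rw [← hf, map_zero]
  set u : L := ⁅c, c⁆ with hu
  -- 2•u = 0
  have h2 : (2 : ℤ) • u = 0 := by
    have h : u = -u := antisymm c c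
    rw [two_zsmul]
    nth_rewrite 2 [h]
    simp
  -- ⁅c, u⁆ = 0
  have hcu : ⁅c, u⁆ = 0 := by
    have h3 := jacobi c c c
    have h2' : ⁅c, u⁆ + ⁅c, u⁆ = 0 := by
      have : ⁅c, (2 : ℤ) • u⁆ = 0 := by rw [h2, lie_zero]
      rwa [lie_zsmul, two_zsmul] at this
    rw [← hu] at h3
    rw [h2', zero_add] at h3
    exact h3
  have huc : ⁅u, c⁆ = 0 := by rw [antisymm, hcu, neg_zero]
  have huu : ⁅u, u⁆ = 0 := by
    have h := jacobi c c u
    rw [← hu, hcu, lie_zero, huc, lie_zero, zero_add, add_zero] at h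
    exact h
  -- the maps between L and the model
  obtain ⟨φ, ⟨φbr, φc⟩, -⟩ := hfree (ℤ × ZMod 2) (1, 0)
  have φu : φ u = (0, 1) := by
    rw [hu, φbr, φc, model_bracket_def]
    norm_num
  have hzu : (zmultiplesHom L u) ((2 : ℕ) : ℤ) = 0 := by
    simpa using h2
  set lift2 : ZMod 2 →+ L := ZMod.lift 2 ⟨zmultiplesHom L u, hzu⟩ with hlift2
  have lift2_int : ∀ m : ℤ, lift2 ((m : ℤ) : ZMod 2) = m • u := by
    intro m
    rw [hlift2, ZMod.lift_coe]
    simp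
  set ψ : ℤ × ZMod 2 →+ L :=
    ((zmultiplesHom L c).comp (AddMonoidHom.fst ℤ (ZMod 2))) +
      (lift2.comp (AddMonoidHom.snd ℤ (ZMod 2))) with hψ
  have ψapp : ∀ (a : ℤ) (m : ℤ), ψ (a, ((m : ℤ) : ZMod 2)) = a • c + m • u := by
    intro a m
    rw [hψ]
    simp [lift2_int]
  have ψbr : ∀ p q : ℤ × ZMod 2, ψ ⁅p, q⁆ = ⁅ψ p, ψ q⁆ := by
    intro p q
    obtain ⟨a, b⟩ := p
    obtain ⟨a', b'⟩ := q
    obtain ⟨m, rfl⟩ := ZMod.intCast_surjective b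
    obtain ⟨m', rfl⟩ := ZMod.intCast_surjective b'
    rw [model_bracket_def]
    have h1 : ψ ((0 : ℤ), ((a * a' : ℤ) : ZMod 2)) = (a * a') • u := by
      rw [ψapp]; simp
    simp only [h1, ψapp]
    simp only [add_lie, lie_add, zsmul_lie, lie_zsmul, ← hu, hcu, huc, huu,
      smul_smul, smul_zero, add_zero, zero_add]
  have φψ : ∀ p : ℤ × ZMod 2, φ (ψ p) = p := by
    intro p
    obtain ⟨a, b⟩ := p
    obtain ⟨m, rfl⟩ := ZMod.intCast_surjective b
    rw [ψapp, map_add, map_zsmul, map_zsmul, φc, φu]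
    rw [Prod.ext_iff]
    constructor <;> simp
  have ψφ : ∀ x : L, ψ (φ x) = x := by
    obtain ⟨θ, -, θuniq⟩ := hfree L c
    have e1 : ψ.comp φ = θ := by
      apply θuniq
      constructor
      · intro x y
        simp only [AddMonoidHom.comp_apply, φbr, ψbr]
      · simp only [AddMonoidHom.comp_apply, φc]
        have : ψ ((1 : ℤ), (((0 : ℤ) : ZMod 2))) = c := by
          rw [ψapp]; simp
        simpa using this
    have e2 : AddMonoidHom.id L = θ := by
      apply θuniq
      exact ⟨fun x y => rfl, rfl⟩
    intro x
    have := congrArg (fun f => f x) (e1.trans e2.symm)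
    simpa using this
  exact ⟨⟨AddEquiv.mk' ⟨φ, ψ, ψφ, φψ⟩ φ.map_add, φc, φu⟩, h2, hcu, huc, huu⟩
end

section
/- Let σ = [x < y] be a chain in the partition lattice of a finite set S such that each equivalence class of y is a union of at most two equivalence classes of x (a binary chain of length one). Let N be the set of classes of y obtained by merging two classes of x. Then the open interval (x, y) in the partition lattice of S is isomorphic, as a poset, to the poset of proper nonempty subsets of N ordered by inclusion. -/
section Aux

set_option linter.unusedSectionVars false

variable {S : Type} [Fintype S] {x y : Setoid S} {c : Set S}

lemma rel_of_mem_class {c : Set S} (hc : c ∈ y.classes) {s t : S}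
    (hs : s ∈ c) (ht : t ∈ c) : y s t :=
  y.rel_iff_exists_classes.mpr ⟨c, hc, hs, ht⟩

lemma mem_class_of_rel {c : Set S} (hc : c ∈ y.classes) {s t : S}
    (ht : t ∈ c) (h : y s t) : s ∈ c := by
  obtain ⟨u, rfl⟩ := hc
  exact y.trans h ht

lemma xclass_ne_of_not_rel {s t : S} (h : ¬ x s t) :
    {u | x u s} ≠ {u | x u t} := by
  intro he
  have : s ∈ {u | x u t} := he ▸ (x.refl s)
  exact h this

lemma Ax_eq_pair (hle : x ≤ y) (hbin : ∀ c ∈ y.classes, {a | a ∈ x.classes ∧ a ⊆ c}.ncard ≤ 2)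
    {c : Set S} (hc : c ∈ y.classes) {s t : S} (hs : s ∈ c) (ht : t ∈ c) (hst : ¬ x s t) :
    {a | a ∈ x.classes ∧ a ⊆ c} = {{u | x u s}, {u | x u t}} := by
  have hsub : {{u | x u s}, {u | x u t}} ⊆ {a | a ∈ x.classes ∧ a ⊆ c} := by
    rintro a (rfl | rfl)
    · exact ⟨x.mem_classes s, fun u hu => mem_class_of_rel hc hs (Setoid.le_def.mp hle hu)⟩
    · exact ⟨x.mem_classes t, fun u hu => mem_class_of_rel hc ht (Setoid.le_def.mp hle hu)⟩
  have hpair : ({{u | x u s}, {u | x u t}} : Set (Set S)).ncard = 2 :=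
    Set.ncard_pair (xclass_ne_of_not_rel hst)
  exact (Set.eq_of_subset_of_ncard_le hsub (hpair ▸ hbin c hc)).symm

lemma Ax_card_two (hle : x ≤ y) (hbin : ∀ c ∈ y.classes, {a | a ∈ x.classes ∧ a ⊆ c}.ncard ≤ 2)
    {c : Set S} (hc : c ∈ y.classes) {s t : S} (hs : s ∈ c) (ht : t ∈ c) (hst : ¬ x s t) :
    {a | a ∈ x.classes ∧ a ⊆ c}.ncard = 2 := by
  rw [Ax_eq_pair hle hbin hc hs ht hst]
  exact Set.ncard_pair (xclass_ne_of_not_rel hst)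

lemma rel_or_of_mem (hle : x ≤ y) (hbin : ∀ c ∈ y.classes, {a | a ∈ x.classes ∧ a ⊆ c}.ncard ≤ 2)
    {c : Set S} (hc : c ∈ y.classes) {s t : S} (hs : s ∈ c) (ht : t ∈ c) (hst : ¬ x s t)
    {u : S} (hu : u ∈ c) : x u s ∨ x u t := by
  have h1 : {a | a ∈ x.classes ∧ a ⊆ c} = {{v | x v s}, {v | x v t}} :=
    Ax_eq_pair hle hbin hc hs ht hst
  have h2 : {v | x v u} ∈ {a | a ∈ x.classes ∧ a ⊆ c} :=
    ⟨x.mem_classes u, fun v hv => mem_class_of_rel hc hu (Setoid.le_def.mp hle hv)⟩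
  rw [h1] at h2
  rcases h2 with h | h
  · exact Or.inl (by have : u ∈ {v | x v u} := x.refl u; rw [h] at this; exact this)
  · exact Or.inr (by have : u ∈ {v | x v u} := x.refl u; rw [h] at this; exact this)

/-- from a class with exactly two x-subclasses, extract a non-x-related pair -/
lemma exists_pair (h2 : {a | a ∈ x.classes ∧ a ⊆ c}.ncard = 2) (hc : c ∈ y.classes) :
    ∃ s t, s ∈ c ∧ t ∈ c ∧ ¬ x s t := by
  obtain ⟨a, b, hab, hpq⟩ := Set.ncard_eq_two.mp h2
  have ha : a ∈ {a | a ∈ x.classes ∧ a ⊆ c} := by rw [hpq]; left; rfl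
  have hb : b ∈ {a | a ∈ x.classes ∧ a ⊆ c} := by rw [hpq]; right; rfl
  obtain ⟨s, hsa⟩ := Set.nonempty_iff_ne_empty.mpr (fun h => Setoid.empty_notMem_classes (show (∅ : Set S) ∈ x.classes from h ▸ ha.1))
  obtain ⟨t, htb⟩ := Set.nonempty_iff_ne_empty.mpr (fun h => Setoid.empty_notMem_classes (show (∅ : Set S) ∈ x.classes from h ▸ hb.1))
  refine ⟨s, t, ha.2 hsa, hb.2 htb, fun hst => hab ?_⟩
  have h1 : a = {u | x u s} := Setoid.eq_of_mem_classes ha.1 hsa (x.mem_classes s) (x.refl s)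
  have h2 : b = {u | x u t} := Setoid.eq_of_mem_classes hb.1 htb (x.mem_classes t) (x.refl t)
  rw [h1, h2]
  ext u; exact ⟨fun h => x.trans h hst, fun h => x.trans h (x.symm hst)⟩


def Phi (x y z : Setoid S) :
    Set {c // c ∈ y.classes ∧ {a | a ∈ x.classes ∧ a ⊆ c}.ncard = 2} :=
  {c | ∀ s ∈ c.1, ∀ t ∈ c.1, z s t}

def zT (hle : x ≤ y)
    (T : Set {c // c ∈ y.classes ∧ {a | a ∈ x.classes ∧ a ⊆ c}.ncard = 2}) :
    Setoid S where
  r s t := x s t ∨ ∃ c ∈ T, s ∈ c.1 ∧ t ∈ c.1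
  iseqv := by
    constructor
    · exact fun s => Or.inl (x.refl s)
    · rintro s t (h | ⟨c, hc, hs, ht⟩)
      · exact Or.inl (x.symm h)
      · exact Or.inr ⟨c, hc, ht, hs⟩
    · rintro s t u (h1 | ⟨c, hc, hs, ht⟩) (h2 | ⟨c', hc', ht', hu'⟩)
      · exact Or.inl (x.trans h1 h2)
      · exact Or.inr ⟨c', hc', mem_class_of_rel c'.2.1 ht' (Setoid.le_def.mp hle h1), hu'⟩
      · exact Or.inr ⟨c, hc, hs, mem_class_of_rel c.2.1 ht (Setoid.le_def.mp hle (x.symm h2))⟩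
      · have he : c = c' := Subtype.ext (Setoid.eq_of_mem_classes c.2.1 ht c'.2.1 ht')
        exact Or.inr ⟨c', hc', he ▸ hs, hu'⟩

lemma zT_rel (hle : x ≤ y) (T) {s t : S} :
    zT hle T s t ↔ x s t ∨ ∃ c ∈ T, s ∈ c.1 ∧ t ∈ c.1 := Iff.rfl

lemma rel_iff_phi (hle : x ≤ y)
    (hbin : ∀ c ∈ y.classes, {a | a ∈ x.classes ∧ a ⊆ c}.ncard ≤ 2)
    {z : Setoid S} (hxz : x ≤ z) (hzy : z ≤ y) (s t : S) :
    z s t ↔ x s t ∨ ∃ c ∈ Phi x y z, s ∈ c.1 ∧ t ∈ c.1 := by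
  constructor
  · intro h
    by_cases hx : x s t
    · exact Or.inl hx
    · have hc : {u | y u s} ∈ y.classes := y.mem_classes s
      have hs : s ∈ {u | y u s} := y.refl s
      have ht : t ∈ {u | y u s} := y.symm (Setoid.le_def.mp hzy h)
      have hcard := Ax_card_two hle hbin hc hs ht hx
      have hmem : (⟨{u | y u s}, hc, hcard⟩ :
          {c // c ∈ y.classes ∧ {a | a ∈ x.classes ∧ a ⊆ c}.ncard = 2}) ∈ Phi x y z := by
        intro u hu v hv
        have h1 := rel_or_of_mem hle hbin hc hs ht hx hu
        have h2 := rel_or_of_mem hle hbin hc hs ht hx hv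
        have zus : z u s := by
          rcases h1 with h1 | h1
          · exact Setoid.le_def.mp hxz h1
          · exact z.trans (Setoid.le_def.mp hxz h1) (z.symm h)
        have zvs : z v s := by
          rcases h2 with h2 | h2
          · exact Setoid.le_def.mp hxz h2
          · exact z.trans (Setoid.le_def.mp hxz h2) (z.symm h)
        exact z.trans zus (z.symm zvs)
      exact Or.inr ⟨_, hmem, hs, ht⟩
  · rintro (h | ⟨c, hc, hs, ht⟩)
    · exact Setoid.le_def.mp hxz h
    · exact hc s hs t ht

lemma phi_zT (hle : x ≤ y) (T) : Phi x y (zT hle T) = T := by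
  ext c
  constructor
  · intro hc
    obtain ⟨s, t, hs, ht, hst⟩ := exists_pair c.2.2 c.2.1
    rcases hc s hs t ht with h | ⟨c', hc', hs', ht'⟩
    · exact absurd h hst
    · have he : c' = c := Subtype.ext (Setoid.eq_of_mem_classes c'.2.1 hs' c.2.1 hs)
      exact he ▸ hc'
  · intro hc s hs t ht
    exact Or.inr ⟨c, hc, hs, ht⟩

end Aux

/-- let `[x < y]` be a binary chain of length one in the partition
lattice of a finite set `S` (partitions encoded as setoids, ordered by
refinement): each equivalence class of `y` is the union of at most two classes of
`x`.  Let `N` be the set of classes of `y` obtained by merging two classes of `x`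
(i.e. those containing exactly two `x`-classes).  Then the open interval `(x, y)`
is isomorphic, as a poset, to the poset of proper nonempty subsets of `N` ordered
by inclusion. -/
theorem stmt18 (S : Type) [Fintype S] (x y : Setoid S) (hxy : x < y)
    (hbin : ∀ c ∈ y.classes, {a | a ∈ x.classes ∧ a ⊆ c}.ncard ≤ 2) :
    Nonempty
      ({z : Setoid S // x < z ∧ z < y} ≃o
        {T : Set {c // c ∈ y.classes ∧ {a | a ∈ x.classes ∧ a ⊆ c}.ncard = 2} //
          T ≠ ∅ ∧ T ≠ Set.univ}) := by
  have hle : x ≤ y := hxy.le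
  have linv : ∀ z : Setoid S, x ≤ z → z ≤ y → zT hle (Phi x y z) = z := by
    intro z hxz hzy
    apply Setoid.ext
    intro s t
    rw [zT_rel]
    exact (rel_iff_phi hle hbin hxz hzy s t).symm
  refine ⟨{ toFun := fun z => ⟨Phi x y z.1, ?_, ?_⟩
          , invFun := fun T => ⟨zT hle T.1, ?_, ?_⟩
          , left_inv := ?_, right_inv := ?_, map_rel_iff' := ?_ }⟩
  · -- Phi z ≠ ∅
    intro hemp
    refine z.2.1.not_ge (Setoid.le_def.mpr ?_)
    intro s t h
    rcases (rel_iff_phi hle hbin z.2.1.le z.2.2.le s t).mp h with h' | ⟨c, hc, -, -⟩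
    · exact h'
    · rw [hemp] at hc; exact absurd hc (Set.notMem_empty c)
  · -- Phi z ≠ univ
    intro huniv
    refine z.2.2.not_ge (Setoid.le_def.mpr ?_)
    intro s t h
    by_cases hx : x s t
    · exact Setoid.le_def.mp z.2.1.le hx
    · have hc : {u | y u s} ∈ y.classes := y.mem_classes s
      have hs : s ∈ {u | y u s} := y.refl s
      have ht : t ∈ {u | y u s} := y.symm h
      have hcard := Ax_card_two hle hbin hc hs ht hx
      have hmem : (⟨{u | y u s}, hc, hcard⟩ :
          {c // c ∈ y.classes ∧ {a | a ∈ x.classes ∧ a ⊆ c}.ncard = 2}) ∈ Phi x y z.1 := by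
        rw [huniv]; trivial
      exact hmem s hs t ht
  · -- x < zT
    refine lt_of_le_of_ne (Setoid.le_def.mpr (by intro s t h; exact Or.inl h)) ?_
    intro he
    obtain ⟨c, hc⟩ := Set.nonempty_iff_ne_empty.mpr T.2.1
    obtain ⟨s, t, hs, ht, hst⟩ := exists_pair c.2.2 c.2.1
    have hzt : zT hle T.1 s t := Or.inr ⟨c, hc, hs, ht⟩
    rw [← he] at hzt
    exact hst hzt
  · -- zT < y
    refine lt_of_le_of_ne (Setoid.le_def.mpr ?_) ?_
    · rintro s t (h | ⟨c, hc, hs, ht⟩)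
      · exact Setoid.le_def.mp hle h
      · exact rel_of_mem_class c.2.1 hs ht
    · intro he
      apply T.2.2
      ext c
      simp only [Set.mem_univ, iff_true]
      obtain ⟨s, t, hs, ht, hst⟩ := exists_pair c.2.2 c.2.1
      have hy : y s t := rel_of_mem_class c.2.1 hs ht
      rw [← he] at hy
      rcases hy with h | ⟨c', hc', hs', ht'⟩
      · exact absurd h hst
      · have hcc : c' = c := Subtype.ext (Setoid.eq_of_mem_classes c'.2.1 hs' c.2.1 hs)
        exact hcc ▸ hc'
  · intro z
    exact Subtype.ext (linv z.1 z.2.1.le z.2.2.le)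
  · intro T
    exact Subtype.ext (phi_zT hle T.1)
  · intro z w
    show Phi x y z.1 ⊆ Phi x y w.1 ↔ z ≤ w
    constructor
    · intro h
      have hm : zT hle (Phi x y z.1) ≤ zT hle (Phi x y w.1) := by
        apply Setoid.le_def.mpr
        rintro s t (hx | ⟨c, hc, hs, ht⟩)
        · exact Or.inl hx
        · exact Or.inr ⟨c, h hc, hs, ht⟩
      rw [linv z.1 z.2.1.le z.2.2.le, linv w.1 w.2.1.le w.2.2.le] at hm
      exact hm
    · intro h c hc s hs t ht
      exact Setoid.le_def.mp h (hc s hs t ht)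
end
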